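/- Let $\Theta \subset \mathbb{R}$ be compact, $\eps > 0$, and let $\mathcal{D}_\eps \subset \Theta^j$ be the set of $\eps$-separated $j$-tuples. For $(\theta_1, \dots, \theta_j) \in \mathcal{D}_\eps$ and a coefficient vector $\Lambda \in \mathbb{R}^d$ (indexed by $(i,\ell)$, $1 \le \ell \le d_i$, $\sum d_i = d$), the map $\Lambda \mapsto A(\theta_1,\dots,\theta_j)\Lambda$ satisfies $c_*(\eps) \|\Lambda\| \le \|A(\theta_1,\dots,\theta_j)\Lambda\| \le c^*(\eps)\|\Lambda\|$ for positive constants $c_*(\eps), c^*(\eps)$ independent of $(\theta_i)$ and $\Lambda$. -/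

import Mathlib

/-!
A row vector `c` in the left kernel of `A(θ)` gives the polynomial `q = ∑ₖ cₖ Xᵏ / k!`, whose
`ℓ`-th derivative at `θᵢ` is the `(i, ℓ)` entry of `c A(θ)`. So `q` vanishes to order `dᵢ` at
each of the distinct points `θᵢ` while having degree `< ∑ dᵢ`, forcing `q = 0`: `A(θ)` is
invertible whenever the `θᵢ` are distinct. Both `θ ↦ A(θ)` and `θ ↦ A(θ)⁻¹` are then continuous
on the compact set of `ε`-separated tuples, hence bounded there in operator norm.
-/

open Polynomial Function Nat

namespace Polynomial

variable {K : Type*} [Field K] [CharZero K]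

theorem eval_iterate_derivative_C_inv_factorial_mul_X_pow (k ℓ : ℕ) (x : K) :
    (derivative^[ℓ] (C ((k ! : K)⁻¹) * X ^ k)).eval x =
      if ℓ ≤ k then x ^ (k - ℓ) / ((k - ℓ)! : K) else 0 := by
  rw [iterate_derivative_C_mul, iterate_derivative_X_pow_eq_C_mul, eval_mul, eval_C, eval_mul,
    eval_C, eval_pow, eval_X]
  split_ifs with hℓk
  · have hfac : ((k - ℓ)! : K) * (k.descFactorial ℓ : K) = (k ! : K) := by
      exact_mod_cast Nat.factorial_mul_descFactorial hℓk
    have hdesc : (k.descFactorial ℓ : K) ≠ 0 := by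
      exact_mod_cast (Nat.descFactorial_pos.2 hℓk).ne'
    rw [← hfac]
    field_simp
  · simp [Nat.descFactorial_eq_zero_iff_lt.2 (not_le.1 hℓk)]

theorem eq_zero_of_isRoot_iterate_derivative {ι : Type*} [Fintype ι] {θ : ι → K}
    (hθ : Injective θ) {m : ι → ℕ} {q : K[X]} (hdeg : q.degree < ↑(∑ i, m i))
    (hroot : ∀ i, ∀ ℓ < m i, (derivative^[ℓ] q).IsRoot (θ i)) : q = 0 := by
  by_contra hq
  have hdvd (i : ι) : (X - C (θ i)) ^ m i ∣ q := by
    refine (le_rootMultiplicity_iff hq).1 ?_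
    rcases Nat.eq_zero_or_pos (m i) with hm | hm
    · simp [hm]
    · have := lt_rootMultiplicity_of_isRoot_iterate_derivative_of_mem_nonZeroDivisors
        (n := m i - 1) hq (fun ℓ hℓ => hroot i ℓ (by omega))
        (mem_nonZeroDivisors_of_ne_zero (by exact_mod_cast (m i - 1).factorial_ne_zero))
      omega
  have hprod : (∏ i, (X - C (θ i)) ^ m i) ∣ q :=
    Finset.prod_dvd_of_coprime
      (fun a _ b _ hab => (pairwise_coprime_X_sub_C hθ hab).pow) fun i _ => hdvd i
  have := natDegree_le_of_dvd hprod hq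
  rw [natDegree_prod _ _ fun i _ => pow_ne_zero _ (X_sub_C_ne_zero _)] at this
  simp only [natDegree_pow, natDegree_X_sub_C, mul_one] at this
  rw [degree_eq_natDegree hq, Nat.cast_lt] at hdeg
  omega

end Polynomial

open Matrix

section ConfluentVandermonde

variable {K : Type*} [Field K] {ι : Type*} {m : ι → ℕ} {n : ℕ}

/-- The matrix `A(θ)`: the column indexed by `e ⟨i, ℓ⟩` is the `ℓ`-th derivative at `θ i` of
`x ↦ (xᵏ / k!)ₖ`, so this is the confluent Vandermonde matrix with its rows rescaled by `1 / k!`. -/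
def confluentVandermonde (m : ι → ℕ) (e : (Σ i, Fin (m i)) ≃ Fin n) (θ : ι → K) :
    Matrix (Fin n) (Fin n) K :=
  Matrix.of fun k c =>
    if ((e.symm c).2 : ℕ) ≤ k
    then θ (e.symm c).1 ^ (k - (e.symm c).2 : ℕ) / ((k - (e.symm c).2 : ℕ)! : K)
    else 0

theorem vecMul_confluentVandermonde_apply [CharZero K] (e : (Σ i, Fin (m i)) ≃ Fin n)
    (θ : ι → K) (c : Fin n → K) (i : ι) (ℓ : Fin (m i)) :
    (c ᵥ* confluentVandermonde m e θ) (e ⟨i, ℓ⟩) =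
      (derivative^[ℓ] (∑ k : Fin n, C (c k / k !) * X ^ (k : ℕ))).eval (θ i) := by
  simp only [vecMul, dotProduct]
  rw [iterate_derivative_sum, eval_finsetSum]
  refine Finset.sum_congr rfl fun k _ => ?_
  rw [div_eq_mul_inv, C_mul, mul_assoc, iterate_derivative_C_mul, eval_mul, eval_C,
    eval_iterate_derivative_C_inv_factorial_mul_X_pow, confluentVandermonde, of_apply,
    Equiv.symm_apply_apply, mul_ite, mul_zero]

theorem coeff_sum_fin_C_mul_X_pow (f : Fin n → K) (k : Fin n) :
    (∑ i : Fin n, C (f i) * X ^ (i : ℕ)).coeff k = f k := by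
  simp only [finsetSum_coeff, coeff_C_mul_X_pow, Fin.val_inj, Finset.sum_ite_eq,
    Finset.mem_univ, if_true]

theorem det_confluentVandermonde_ne_zero [CharZero K] [Fintype ι] (hsum : ∑ i, m i = n)
    (e : (Σ i, Fin (m i)) ≃ Fin n) {θ : ι → K} (hθ : Injective θ) :
    (confluentVandermonde m e θ).det ≠ 0 := by
  intro hdet
  obtain ⟨c, hc0, hc⟩ := Matrix.exists_vecMul_eq_zero_iff.2 hdet
  set q : K[X] := ∑ k : Fin n, C (c k / k !) * X ^ (k : ℕ)
  have hq : q = 0 := by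
    refine eq_zero_of_isRoot_iterate_derivative hθ (by rw [hsum]; exact degree_sum_fin_lt _)
      fun i ℓ hℓ => ?_
    rw [IsRoot, ← vecMul_confluentVandermonde_apply e θ c i ⟨ℓ, hℓ⟩, hc, Pi.zero_apply]
  refine hc0 (funext fun k => ?_)
  have hk : q.coeff k = 0 := by rw [hq, coeff_zero]
  rw [coeff_sum_fin_C_mul_X_pow, div_eq_zero_iff] at hk
  exact hk.resolve_right (Nat.cast_ne_zero.2 (k : ℕ).factorial_ne_zero)

theorem continuous_confluentVandermonde [TopologicalSpace K] [IsTopologicalDivisionRing K]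
    (e : (Σ i, Fin (m i)) ≃ Fin n) :
    Continuous (confluentVandermonde (K := K) m e) :=
  continuous_pi fun k => continuous_pi fun c => by
    simp only [confluentVandermonde, Matrix.of_apply]
    split_ifs <;> fun_prop

end ConfluentVandermonde

section UniformBounds

-- The `L∞` operator norm is the one compatible with the sup norm on `ι → 𝕜`.
attribute [local instance] Matrix.linftyOpNormedAddCommGroup

variable {𝕜 : Type*} [NormedField 𝕜] {X : Type*} [TopologicalSpace X] {S : Set X}
  {ι : Type*} [Fintype ι] {M : X → Matrix ι ι 𝕜}

theorem IsCompact.exists_forall_norm_mulVec_le (hS : IsCompact S) (hM : ContinuousOn M S) :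
    ∃ C > 0, ∀ x ∈ S, ∀ v, ‖M x *ᵥ v‖ ≤ C * ‖v‖ := by
  obtain ⟨C, hC⟩ := hS.exists_bound_of_continuousOn hM
  refine ⟨max C 1, by positivity, fun x hx v => ?_⟩
  calc ‖M x *ᵥ v‖ ≤ ‖M x‖ * ‖v‖ := linfty_opNorm_mulVec _ _
    _ ≤ max C 1 * ‖v‖ := by gcongr; exact (hC x hx).trans (le_max_left _ _)

theorem IsCompact.exists_forall_le_norm_mulVec [DecidableEq ι] (hS : IsCompact S)
    (hM : ContinuousOn M S) (hdet : ∀ x ∈ S, (M x).det ≠ 0) :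
    ∃ c > 0, ∀ x ∈ S, ∀ v, c * ‖v‖ ≤ ‖M x *ᵥ v‖ := by
  have hMinv : ContinuousOn (fun x => (M x)⁻¹) S := fun x hx =>
    (continuousAt_matrix_inv _ (by rw [Ring.inverse_eq_inv']; exact continuousAt_inv₀ (hdet x hx))
      ).comp_continuousWithinAt (hM x hx)
  obtain ⟨C, hC, hbound⟩ := hS.exists_forall_norm_mulVec_le hMinv
  refine ⟨C⁻¹, inv_pos.2 hC, fun x hx v => ?_⟩
  have hv : (M x)⁻¹ *ᵥ (M x *ᵥ v) = v := by
    rw [mulVec_mulVec, nonsing_inv_mul _ (isUnit_iff_ne_zero.2 (hdet x hx)), one_mulVec]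
  rw [inv_mul_le_iff₀ hC]
  simpa only [hv] using hbound x hx (M x *ᵥ v)

end UniformBounds

section SeparatedTuples

variable {ι : Type*} {Θ : Set ℝ} {ε : ℝ}

def separatedTuples (Θ : Set ℝ) (ε : ℝ) : Set (ι → ℝ) :=
  {θ | (∀ i, θ i ∈ Θ) ∧ ∀ i i', i ≠ i' → ε ≤ |θ i - θ i'|}

theorem isCompact_separatedTuples [Finite ι] (hΘ : IsCompact Θ) :
    IsCompact (separatedTuples (ι := ι) Θ ε) := by
  have hpi : {θ : ι → ℝ | ∀ i, θ i ∈ Θ} = Set.univ.pi fun _ => Θ := by ext; simp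
  rw [separatedTuples, Set.ofPred_and, hpi]
  refine (isCompact_univ_pi fun _ => hΘ).inter_right ?_
  simp only [Set.ofPred_forall]
  exact isClosed_iInter fun i => isClosed_iInter fun i' => isClosed_iInter fun _ =>
    isClosed_le continuous_const (by fun_prop)

theorem injective_of_mem_separatedTuples (hε : 0 < ε) {θ : ι → ℝ}
    (hθ : θ ∈ separatedTuples Θ ε) : Injective θ :=
  fun i i' h => by_contra fun hne => by simpa [h] using hε.trans_le (hθ.2 i i' hne)

end SeparatedTuples

theorem stmt_4_general (Θ : Set ℝ) (hΘ : IsCompact Θ) (j d : ℕ)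
    (dv : Fin j → ℕ) (hsum : ∑ i, dv i = d)
    (e : (Σ i : Fin j, Fin (dv i)) ≃ Fin d) (ε : ℝ) (hε : 0 < ε) :
    ∃ cmin cmax : ℝ, 0 < cmin ∧ 0 < cmax ∧
      ∀ θ : Fin j → ℝ, (∀ i, θ i ∈ Θ) → (∀ i i', i ≠ i' → ε ≤ |θ i - θ i'|) →
        ∀ Λ : Fin d → ℝ,
          cmin * ‖Λ‖ ≤
            ‖(Matrix.of fun (k c : Fin d) =>
                if ((e.symm c).2 : ℕ) ≤ (k : ℕ)
                then θ (e.symm c).1 ^ ((k : ℕ) - ((e.symm c).2 : ℕ)) /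
                  (Nat.factorial ((k : ℕ) - ((e.symm c).2 : ℕ)) : ℝ)
                else 0).mulVec Λ‖ ∧
          ‖(Matrix.of fun (k c : Fin d) =>
                if ((e.symm c).2 : ℕ) ≤ (k : ℕ)
                then θ (e.symm c).1 ^ ((k : ℕ) - ((e.symm c).2 : ℕ)) /
                  (Nat.factorial ((k : ℕ) - ((e.symm c).2 : ℕ)) : ℝ)
                else 0).mulVec Λ‖ ≤ cmax * ‖Λ‖ := by
  have hS := isCompact_separatedTuples (ι := Fin j) (ε := ε) hΘ
  have hA := (continuous_confluentVandermonde (K := ℝ) e).continuousOn (s := separatedTuples Θ ε)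
  obtain ⟨cmin, hcmin, hlower⟩ := hS.exists_forall_le_norm_mulVec hA
    fun θ hθ => det_confluentVandermonde_ne_zero hsum e (injective_of_mem_separatedTuples hε hθ)
  obtain ⟨cmax, hcmax, hupper⟩ := hS.exists_forall_norm_mulVec_le hA
  exact ⟨cmin, cmax, hcmin, hcmax, fun θ hΘθ hsep Λ =>
    ⟨hlower θ ⟨hΘθ, hsep⟩ Λ, hupper θ ⟨hΘθ, hsep⟩ Λ⟩⟩

/-- uniform two-sided bounds `c_*(ε)‖Λ‖ ≤ ‖A(θ)Λ‖ ≤ c^*(ε)‖Λ‖`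
for the matrix `A(θ)` with columns `a_{i,ℓ}[k] = θ_i^{k-ℓ}/(k-ℓ)! · 1_{k ≥ ℓ}`,
uniformly over ε-separated tuples `θ` in a compact `Θ`. -/
theorem stmt_4 (Θ : Set ℝ) (hΘ : IsCompact Θ) (j d : ℕ) (hj : 0 < j)
    (dv : Fin j → ℕ) (hdv : ∀ i, 0 < dv i) (hsum : ∑ i, dv i = d)
    (e : (Σ i : Fin j, Fin (dv i)) ≃ Fin d) (ε : ℝ) (hε : 0 < ε) :
    ∃ cmin cmax : ℝ, 0 < cmin ∧ 0 < cmax ∧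
      ∀ θ : Fin j → ℝ, (∀ i, θ i ∈ Θ) → (∀ i i', i ≠ i' → ε ≤ |θ i - θ i'|) →
        ∀ Λ : Fin d → ℝ,
          cmin * ‖Λ‖ ≤
            ‖(Matrix.of fun (k c : Fin d) =>
                if ((e.symm c).2 : ℕ) ≤ (k : ℕ)
                then θ (e.symm c).1 ^ ((k : ℕ) - ((e.symm c).2 : ℕ)) /
                  (Nat.factorial ((k : ℕ) - ((e.symm c).2 : ℕ)) : ℝ)
                else 0).mulVec Λ‖ ∧
          ‖(Matrix.of fun (k c : Fin d) =>
                if ((e.symm c).2 : ℕ) ≤ (k : ℕ)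
                then θ (e.symm c).1 ^ ((k : ℕ) - ((e.symm c).2 : ℕ)) /
                  (Nat.factorial ((k : ℕ) - ((e.symm c).2 : ℕ)) : ℝ)
                else 0).mulVec Λ‖ ≤ cmax * ‖Λ‖ :=
  stmt_4_general Θ hΘ j d dv hsum e ε hε
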